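/- arXiv:2502.14154 — 2 statements merged into one kernel-verified Lean document; each statement's English description precedes it below -/
import Mathlib

section
/- Suppose φ is a strategy-proof, non-bossy, and normalized-cone-continuous rule on three agents and three objects. Let i be an agent, u a utility profile, and ū_i a normalized (summing to one) no-ties utility such that u_i and ū_i are effectively the same (same induced strict order and equal rate of middle substitution). Then φ(u_i, u_{-i}) = φ(ū_i, u_{-i}). -/
open Finset Filter Topology

/-- No ties on degenerate lotteries. -/
def NoTies (u : Fin 3 → ℝ) : Prop := ∀ x y : Fin 3, x ≠ y → u x ≠ u y

/-- A lottery over three objects. -/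
def IsLottery (π : Fin 3 → ℝ) : Prop := (∀ x, 0 ≤ π x) ∧ ∑ x, π x = 1

/-- A 3×3 bistochastic matrix (rows = agents, columns = objects). -/
def Bistochastic (π : Fin 3 → Fin 3 → ℝ) : Prop :=
  (∀ i x, 0 ≤ π i x) ∧ (∀ i, ∑ x, π i x = 1) ∧ (∀ x, ∑ i, π i x = 1)

/-- Expected utility of lottery `π` under Bernoulli utility `u`. -/
def EU (u π : Fin 3 → ℝ) : ℝ := ∑ x, u x * π x

/-- `u` and `v` induce the same strict order on objects. -/
def SameOrder (u v : Fin 3 → ℝ) : Prop := ∀ x y : Fin 3, u x > u y ↔ v x > v y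

def NoTiesProfile (u : Fin 3 → Fin 3 → ℝ) : Prop := ∀ i, NoTies (u i)

/-- Utilities normalized to sum to one. -/
def Normalized (u : Fin 3 → ℝ) : Prop := ∑ x, u x = 1

/-- Rate of middle substitution, for `u a > u b > u c`. -/
noncomputable def mu (u : Fin 3 → ℝ) (a b c : Fin 3) : ℝ := (u b - u c) / (u a - u c)

/-- Effectively the same: same strict order and same rate of middle substitution. -/
def EffSame (u v : Fin 3 → ℝ) : Prop :=
  SameOrder u v ∧ ∀ a b c : Fin 3, u a > u b → u b > u c → mu u a b c = mu v a b c

/-- The rule maps (no-ties) profiles to bistochastic matrices. -/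
def BistochasticValued (φ : (Fin 3 → Fin 3 → ℝ) → Fin 3 → Fin 3 → ℝ) : Prop :=
  ∀ u, NoTiesProfile u → Bistochastic (φ u)

def StrategyProof (φ : (Fin 3 → Fin 3 → ℝ) → Fin 3 → Fin 3 → ℝ) : Prop :=
  ∀ u i ui', NoTiesProfile u → NoTies ui' →
    EU (u i) (φ u i) ≥ EU (u i) (φ (Function.update u i ui') i)

def NonBossy (φ : (Fin 3 → Fin 3 → ℝ) → Fin 3 → Fin 3 → ℝ) : Prop :=
  ∀ u i ui', NoTiesProfile u → NoTies ui' →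
    φ u i = φ (Function.update u i ui') i → φ u = φ (Function.update u i ui')

/-- `π'` Pareto-dominates `π` at `u` in expected utility. -/
def Dominates (u π' π : Fin 3 → Fin 3 → ℝ) : Prop :=
  (∀ j, EU (u j) (π' j) ≥ EU (u j) (π j)) ∧ ∃ i, EU (u i) (π' i) > EU (u i) (π i)

def Efficient (φ : (Fin 3 → Fin 3 → ℝ) → Fin 3 → Fin 3 → ℝ) : Prop :=
  ∀ u, NoTiesProfile u → ¬ ∃ π', Bistochastic π' ∧ Dominates u π' (φ u)

/-- Normalized-cone-continuity. -/
def NCContinuous (φ : (Fin 3 → Fin 3 → ℝ) → Fin 3 → Fin 3 → ℝ) : Prop :=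
  ∀ (u : Fin 3 → Fin 3 → ℝ) (i : Fin 3) (us : ℕ → Fin 3 → ℝ),
    NoTiesProfile u → Normalized (u i) →
    (∀ k, NoTies (us k) ∧ Normalized (us k)) →
    Tendsto us atTop (nhds (u i)) →
    Tendsto (fun k => φ (Function.update u i (us k))) atTop (nhds (φ u))

lemma fin3_cover : ∀ (a b c x : Fin 3), a ≠ b → a ≠ c → b ≠ c → x = a ∨ x = b ∨ x = c := by decide

lemma sum3 (a b c : Fin 3) (h1 : a ≠ b) (h2 : a ≠ c) (h3 : b ≠ c) (f : Fin 3 → ℝ) :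
    ∑ x, f x = f a + f b + f c := by
  have hu : (Finset.univ : Finset (Fin 3)) = {a, b, c} := by
    symm; rw [Finset.eq_univ_iff_forall]
    intro x
    have := fin3_cover a b c x h1 h2 h3
    simp only [Finset.mem_insert, Finset.mem_singleton]; tauto
  rw [hu, Finset.sum_insert (by simp [h1, h2]), Finset.sum_insert (by simp [h3]),
    Finset.sum_singleton]
  ring


lemma noties_of_order (f : Fin 3 → ℝ) (a b c : Fin 3) (h1 : a ≠ b) (h2 : a ≠ c) (h3 : b ≠ c)
    (hab : f a > f b) (hbc : f b > f c) : NoTies f := by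
  intro x y hxy
  have hx := fin3_cover a b c x h1 h2 h3
  have hy := fin3_cover a b c y h1 h2 h3
  rcases hx with rfl | rfl | rfl <;> rcases hy with rfl | rfl | rfl <;>
    first
      | exact absurd rfl hxy
      | intro h; linarith

lemma exists_order (f : Fin 3 → ℝ) (h : NoTies f) :
    ∃ a b c : Fin 3, a ≠ b ∧ a ≠ c ∧ b ≠ c ∧ f a > f b ∧ f b > f c := by
  rcases lt_or_gt_of_ne (h 0 1 (by decide)) with h01 | h01 <;>
    rcases lt_or_gt_of_ne (h 0 2 (by decide)) with h02 | h02 <;>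
    rcases lt_or_gt_of_ne (h 1 2 (by decide)) with h12 | h12 <;>
    first
      | exact ⟨0, 1, 2, by decide, by decide, by decide, by linarith, by linarith⟩
      | exact ⟨0, 2, 1, by decide, by decide, by decide, by linarith, by linarith⟩
      | exact ⟨1, 0, 2, by decide, by decide, by decide, by linarith, by linarith⟩
      | exact ⟨1, 2, 0, by decide, by decide, by decide, by linarith, by linarith⟩
      | exact ⟨2, 0, 1, by decide, by decide, by decide, by linarith, by linarith⟩
      | exact ⟨2, 1, 0, by decide, by decide, by decide, by linarith, by linarith⟩

noncomputable def pert (ub : Fin 3 → ℝ) (a b : Fin 3) (ε : ℝ) : Fin 3 → ℝ :=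
  fun x => if x = a then ub a - ε else if x = b then ub b + ε else ub x

lemma pert_a (ub : Fin 3 → ℝ) (a b : Fin 3) (ε : ℝ) : pert ub a b ε a = ub a - ε := by
  simp [pert]

lemma pert_b (ub : Fin 3 → ℝ) (a b : Fin 3) (ε : ℝ) (hba : b ≠ a) :
    pert ub a b ε b = ub b + ε := by simp [pert, hba]

lemma pert_other (ub : Fin 3 → ℝ) (a b : Fin 3) (ε : ℝ) (x : Fin 3) (hxa : x ≠ a) (hxb : x ≠ b) :
    pert ub a b ε x = ub x := by simp [pert, hxa, hxb]

set_option maxHeartbeats 1000000 in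
theorem stmt5 (φ : (Fin 3 → Fin 3 → ℝ) → Fin 3 → Fin 3 → ℝ)
    (hB : BistochasticValued φ) (hSP : StrategyProof φ)
    (hNB : NonBossy φ) (hC : NCContinuous φ)
    (u : Fin 3 → Fin 3 → ℝ) (hu : NoTiesProfile u) (i : Fin 3)
    (ub : Fin 3 → ℝ) (hub : NoTies ub) (hnorm : Normalized ub)
    (heff : EffSame (u i) ub) :
    φ u = φ (Function.update u i ub) := by
  obtain ⟨a, b, c, h1, h2, h3, hab, hbc⟩ := exists_order (u i) (hu i)
  have hSO := heff.1
  -- order of ub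
  have oab : ub a > ub b := (hSO a b).mp hab
  have obc : ub b > ub c := (hSO b c).mp hbc
  -- affine relation ub = α • (u i) + β
  have hACpos : u i a - u i c > 0 := by linarith
  have hUACpos : ub a - ub c > 0 := by linarith
  set A := u i with hA
  set α : ℝ := (ub a - ub c) / (A a - A c) with hαdef
  have hα : 0 < α := div_pos hUACpos hACpos
  set β : ℝ := ub a - α * A a with hβdef
  have hαac : α * (A a - A c) = ub a - ub c :=
    div_mul_cancel₀ _ (ne_of_gt hACpos)
  have hcross : (A b - A c) * (ub a - ub c) = (ub b - ub c) * (A a - A c) := by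
    have hmu := heff.2 a b c hab hbc
    unfold mu at hmu
    rw [div_eq_div_iff (ne_of_gt hACpos) (ne_of_gt hUACpos)] at hmu
    linarith
  have hαbc : α * (A b - A c) = ub b - ub c := by
    rw [hαdef]
    field_simp
    linear_combination hcross
  have hubx : ∀ x : Fin 3, ub x = α * A x + β := by
    intro x
    rcases fin3_cover a b c x h1 h2 h3 with rfl | rfl | rfl
    · rw [hβdef]; ring
    · have : ub a = α * A a + β := by rw [hβdef]; ring
      linarith [hαac, hαbc]
    · have : ub a = α * A a + β := by rw [hβdef]; ring
      linarith [hαac]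
  -- affine identity on EU for unit-sum vectors
  have haff : ∀ ρ : Fin 3 → ℝ, (∑ x, ρ x) = 1 → EU ub ρ = α * EU A ρ + β := by
    intro ρ hρ
    rw [sum3 a b c h1 h2 h3] at hρ
    simp only [EU, sum3 a b c h1 h2 h3]
    linear_combination ρ a * hubx a + ρ b * hubx b + ρ c * hubx c + β * hρ
  -- profiles
  have hu' : NoTiesProfile (Function.update u i ub) := by
    intro j
    rcases eq_or_ne j i with rfl | hji
    · rw [Function.update_self]; exact hub
    · rw [Function.update_of_ne hji]; exact hu j
  have hrow : ∀ (w : Fin 3 → Fin 3 → ℝ), NoTiesProfile w → ∑ x, φ w i x = 1 :=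
    fun w hw => (hB w hw).2.1 i
  -- main EU equality
  have h1sp : EU A (φ u i) ≥ EU A (φ (Function.update u i ub) i) := hSP u i ub hu hub
  have h2sp : EU ub (φ (Function.update u i ub) i) ≥ EU ub (φ u i) := by
    have := hSP (Function.update u i ub) i (u i) hu' (hu i)
    rwa [Function.update_self, Function.update_idem, Function.update_eq_self] at this
  have heuq : EU A (φ u i) = EU A (φ (Function.update u i ub) i) := by
    refine le_antisymm ?_ h1sp
    have e1 := haff (φ u i) (hrow u hu)
    have e2 := haff (φ (Function.update u i ub) i) (hrow _ hu')
    refine le_of_mul_le_mul_left ?_ hα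
    linarith
  -- gap
  set g3 : ℝ := min (ub a - ub b) (ub b - ub c) / 3 with hg3def
  have hg3 : 0 < g3 := by
    rw [hg3def]
    have := lt_min (by linarith : (0:ℝ) < ub a - ub b) (by linarith : (0:ℝ) < ub b - ub c)
    linarith [min_le_left (ub a - ub b) (ub b - ub c)]
  have h3ga : 3 * g3 ≤ ub a - ub b := by
    rw [hg3def]; linarith [min_le_left (ub a - ub b) (ub b - ub c)]
  have h3gb : 3 * g3 ≤ ub b - ub c := by
    rw [hg3def]; linarith [min_le_right (ub a - ub b) (ub b - ub c)]
  -- properties of perturbations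
  have hvprop : ∀ ε : ℝ, |ε| ≤ g3 →
      NoTies (pert ub a b ε) ∧ Normalized (pert ub a b ε) := by
    intro ε hε
    rw [abs_le] at hε
    have hba : b ≠ a := h1.symm
    have hord1 : pert ub a b ε a > pert ub a b ε b := by
      rw [pert_a, pert_b _ _ _ _ hba]; linarith [h3ga]
    have hord2 : pert ub a b ε b > pert ub a b ε c := by
      rw [pert_b _ _ _ _ hba, pert_other _ _ _ _ c h2.symm h3.symm]; linarith [h3gb]
    refine ⟨noties_of_order _ a b c h1 h2 h3 hord1 hord2, ?_⟩
    unfold Normalized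
    rw [sum3 a b c h1 h2 h3, pert_a, pert_b _ _ _ _ hba,
      pert_other _ _ _ _ c h2.symm h3.symm]
    have := hnorm
    unfold Normalized at this
    rw [sum3 a b c h1 h2 h3] at this
    linarith
  -- key per-sequence facts
  have key : ∀ ε : ℕ → ℝ, (∀ k, |ε k| ≤ g3) → Tendsto ε atTop (nhds 0) →
      (∀ k, ε k * ((φ (Function.update u i (pert ub a b (ε k))) i b
          - φ (Function.update u i (pert ub a b (ε k))) i a)
          - (φ u i b - φ u i a)) ≥ 0)
      ∧ Tendsto (fun k => φ (Function.update u i (pert ub a b (ε k))) i b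
          - φ (Function.update u i (pert ub a b (ε k))) i a) atTop
          (nhds (φ (Function.update u i ub) i b - φ (Function.update u i ub) i a)) := by
    intro ε hbnd hto
    have hvk : ∀ k, NoTies (pert ub a b (ε k)) ∧ Normalized (pert ub a b (ε k)) :=
      fun k => hvprop (ε k) (hbnd k)
    have hprofk : ∀ k, NoTiesProfile (Function.update u i (pert ub a b (ε k))) := by
      intro k j
      rcases eq_or_ne j i with rfl | hji
      · rw [Function.update_self]; exact (hvk k).1
      · rw [Function.update_of_ne hji]; exact hu j
    constructor
    · intro k
      set v := pert ub a b (ε k) with hvdef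
      set Pk := φ (Function.update u i v) i with hPkdef
      have hAk : EU A (φ u i) ≥ EU A Pk := hSP u i v hu (hvk k).1
      have hVk : EU v Pk ≥ EU v (φ u i) := by
        have := hSP (Function.update u i v) i (u i) (hprofk k) (hu i)
        rwa [Function.update_self, Function.update_idem, Function.update_eq_self] at this
      have hubk : EU ub (φ u i) ≥ EU ub Pk := by
        have e1 := haff (φ u i) (hrow u hu)
        have e2 := haff Pk (hrow _ (hprofk k))
        rw [e1, e2]
        nlinarith [hAk, hα]
      -- expand
      have hVk' : EU v Pk - EU v (φ u i) ≥ 0 := by linarith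
      have hdiff : EU v Pk - EU v (φ u i) - (EU ub Pk - EU ub (φ u i))
          = ε k * ((Pk b - Pk a) - (φ u i b - φ u i a)) := by
        simp only [EU, sum3 a b c h1 h2 h3, hvdef, pert_a, pert_b _ _ _ _ h1.symm,
          pert_other _ _ _ _ c h2.symm h3.symm]
        ring
      linarith [hdiff, hVk', hubk]
    · have hconv := hC (Function.update u i ub) i (fun k => pert ub a b (ε k)) hu'
        (by rw [Function.update_self]; exact hnorm) hvk ?_
      · have hconv2 : Tendsto (fun k => φ (Function.update u i (pert ub a b (ε k))))
            atTop (nhds (φ (Function.update u i ub))) := by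
          simpa only [Function.update_idem] using hconv
        have cb := (tendsto_pi_nhds.mp ((tendsto_pi_nhds.mp hconv2) i)) b
        have ca := (tendsto_pi_nhds.mp ((tendsto_pi_nhds.mp hconv2) i)) a
        exact cb.sub ca
      · rw [Function.update_self]
        rw [tendsto_pi_nhds]
        intro x
        rcases fin3_cover a b c x h1 h2 h3 with hx | hx | hx <;> subst hx
        · simp only [pert_a]
          simpa using tendsto_const_nhds.sub hto
        · simp only [pert_b _ _ _ _ h1.symm]
          simpa using tendsto_const_nhds.add hto
        · simp only [pert_other _ _ _ _ _ h2.symm h3.symm]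
          exact tendsto_const_nhds
  -- positive sequence
  have htoP : Tendsto (fun k : ℕ => g3 * (1 / ((k : ℝ) + 1))) atTop (nhds 0) := by
    simpa using tendsto_one_div_add_atTop_nhds_zero_nat.const_mul g3
  have hbndP : ∀ k : ℕ, |g3 * (1 / ((k : ℝ) + 1))| ≤ g3 := by
    intro k
    have hk : (0:ℝ) < (k : ℝ) + 1 := by positivity
    have h1k : 1 / ((k : ℝ) + 1) ≤ 1 := by
      rw [div_le_one hk]; linarith [Nat.cast_nonneg (α := ℝ) k]
    have h0k : 0 < 1 / ((k : ℝ) + 1) := by positivity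
    rw [abs_of_nonneg (mul_nonneg hg3.le h0k.le)]
    nlinarith
  have hposP : ∀ k : ℕ, 0 < g3 * (1 / ((k : ℝ) + 1)) := by
    intro k
    have hk : (0:ℝ) < (k : ℝ) + 1 := by positivity
    positivity
  obtain ⟨hineqP, hconvP⟩ := key _ hbndP htoP
  have hge : φ (Function.update u i ub) i b - φ (Function.update u i ub) i a
      ≥ φ u i b - φ u i a := by
    refine ge_of_tendsto' hconvP fun k => ?_
    nlinarith [hineqP k, hposP k]
  -- negative sequence
  have htoN : Tendsto (fun k : ℕ => -(g3 * (1 / ((k : ℝ) + 1)))) atTop (nhds 0) := by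
    simpa using htoP.neg
  have hbndN : ∀ k : ℕ, |(-(g3 * (1 / ((k : ℝ) + 1))))| ≤ g3 := by
    intro k; rw [abs_neg]; exact hbndP k
  obtain ⟨hineqN, hconvN⟩ := key _ hbndN htoN
  have hle : φ (Function.update u i ub) i b - φ (Function.update u i ub) i a
      ≤ φ u i b - φ u i a := by
    refine le_of_tendsto' hconvN fun k => ?_
    nlinarith [hineqN k, hposP k]
  have hd : φ (Function.update u i ub) i b - φ (Function.update u i ub) i a
      = φ u i b - φ u i a := le_antisymm hle hge
  -- solve the linear system
  have hsum : φ u i a + φ u i b + φ u i c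
      = φ (Function.update u i ub) i a + φ (Function.update u i ub) i b
        + φ (Function.update u i ub) i c := by
    have s1 := hrow u hu
    have s2 := hrow _ hu'
    rw [sum3 a b c h1 h2 h3] at s1 s2
    linarith
  simp only [EU, sum3 a b c h1 h2 h3] at heuq
  have hkey : (A a + A b - 2 * A c) * (φ u i a - φ (Function.update u i ub) i a) = 0 := by
    linear_combination heuq - A c * hsum + (A b - A c) * hd
  have hda : φ u i a = φ (Function.update u i ub) i a := by
    rcases mul_eq_zero.mp hkey with h | h
    · linarith
    · linarith
  have hdb : φ u i b = φ (Function.update u i ub) i b := by linarith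
  have hdc : φ u i c = φ (Function.update u i ub) i c := by linarith
  have hfi : φ u i = φ (Function.update u i ub) i := by
    funext x
    rcases fin3_cover a b c x h1 h2 h3 with rfl | rfl | rfl <;> assumption
  exact hNB u i ub hu hub hfi
end

section
/- Suppose φ is an efficient, strategy-proof, non-bossy, and normalized-cone-continuous rule on three agents and three objects. Let u be a profile where agents i ≠ j have the same induced strict order with u_i(a) > u_i(b) > u_i(c), and suppose φ_{ib}(u) + φ_{jb}(u) > 0. Then for all no-ties utilities u_i', u_j' inducing the same strict order as u_i, the profile u' = (u_i', u_j', u_k) with k the third agent satisfies φ(u') = φ(u). -/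
open Finset Filter Topology

/-!
For a utility ranking `a ≻ b ≻ c`, expected utility compares lotteries `π` through the score
`π a + μ π b`, where `μ` is the rate of middle substitution. Hence strategy-proofness makes an
agent's share of `b` nondecreasing in the reported `μ`, and an unchanged share of `b` forces an
unchanged row, hence (non-bossiness) an unchanged allocation. With continuity, the allocation at
any such utility equals the one at the normalized utility with the same `μ`, so it suffices that
`i`'s share of `b` is constant in `μ` whenever another agent `o` also ranks `a ≻ b ≻ c`.

If it rose, `i` would hold all three objects at some rate `σ` different from `o`'s rate `τ`.
Moving `o`'s rate from `τ` towards `σ`, the allocation stays put up to a boundary point, just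
beyond which `o` too holds all three objects, at a rate `≠ σ`. That contradicts efficiency: the
agent with the lower rate trades some `b` for a mix of `a` and `c` with the other.
-/

open Function

variable {a b c : Fin 3}

lemma eq_or_eq_or_eq (hab : a ≠ b) (hac : a ≠ c) (hbc : b ≠ c) (x : Fin 3) :
    x = a ∨ x = b ∨ x = c := by
  revert a b c x; decide

lemma exists_ne_ne (i j : Fin 3) : ∃ k, k ≠ i ∧ k ≠ j := by
  revert i j; decide

lemma sum_eq_three (hab : a ≠ b) (hac : a ≠ c) (hbc : b ≠ c) (f : Fin 3 → ℝ) :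
    ∑ x, f x = f a + f b + f c := by
  have huniv : (Finset.univ : Finset (Fin 3)) = {a, b, c} := by
    ext x; simpa using eq_or_eq_or_eq hab hac hbc x
  rw [huniv, Finset.sum_insert (by simp [hab, hac]), Finset.sum_insert (by simp [hbc]),
    Finset.sum_singleton, add_assoc]

lemma forall_three (hab : a ≠ b) (hac : a ≠ c) (hbc : b ≠ c) {q : Fin 3 → Prop}
    (ha : q a) (hb : q b) (hc : q c) (x : Fin 3) : q x := by
  rcases eq_or_eq_or_eq hab hac hbc x with rfl | rfl | rfl <;> assumption

def Ranks (a b c : Fin 3) (v : Fin 3 → ℝ) : Prop := v b < v a ∧ v c < v b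

namespace Ranks

variable {v : Fin 3 → ℝ}

lemma ne_ab (hv : Ranks a b c v) : a ≠ b := by rintro rfl; exact lt_irrefl _ hv.1

lemma ne_bc (hv : Ranks a b c v) : b ≠ c := by rintro rfl; exact lt_irrefl _ hv.2

lemma ne_ac (hv : Ranks a b c v) : a ≠ c := by rintro rfl; exact lt_asymm hv.1 hv.2

lemma distinct (hv : Ranks a b c v) : a ≠ b ∧ a ≠ c ∧ b ≠ c := ⟨hv.ne_ab, hv.ne_ac, hv.ne_bc⟩

lemma noTies (hv : Ranks a b c v) : NoTies v := by
  intro x y hxy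
  obtain ⟨hab, hac, hbc⟩ := hv.distinct
  rcases eq_or_eq_or_eq hab hac hbc x with rfl | rfl | rfl <;>
  rcases eq_or_eq_or_eq hab hac hbc y with rfl | rfl | rfl <;>
  first | exact absurd rfl hxy | (have := hv.1; have := hv.2; intro; linarith)

lemma of_sameOrder {w : Fin 3 → ℝ} (hw : Ranks a b c w) (h : SameOrder v w) : Ranks a b c v :=
  ⟨(h a b).2 hw.1, (h b c).2 hw.2⟩

lemma mu_mem (hv : Ranks a b c v) : mu v a b c ∈ Set.Ioo 0 1 := by
  have hac : 0 < v a - v c := by linarith [hv.1, hv.2]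
  exact ⟨div_pos (by linarith [hv.2]) hac, (div_lt_one hac).2 (by linarith [hv.1])⟩

lemma mu_lt_iff (hv : Ranks a b c v) {x : ℝ} :
    mu v a b c < x ↔ v b < x * v a + (1 - x) * v c := by
  rw [mu, div_lt_iff₀ (by linarith [hv.1, hv.2])]
  constructor <;> intro h <;> linarith

lemma lt_mu_iff (hv : Ranks a b c v) {x : ℝ} :
    x < mu v a b c ↔ x * v a + (1 - x) * v c < v b := by
  rw [mu, lt_div_iff₀ (by linarith [hv.1, hv.2])]
  constructor <;> intro h <;> linarith

end Ranks

/-- Normalized utilities parametrised by their rate of middle substitution: the segment along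
which normalized-cone-continuity is applied. -/
noncomputable def pathUtil (a b : Fin 3) (s : ℝ) : Fin 3 → ℝ :=
  fun x => if x = a then 1 - s / 3 else if x = b then 2 * s / 3 else -(s / 3)

lemma pathUtil_a (s : ℝ) : pathUtil a b s a = 1 - s / 3 := by simp [pathUtil]

lemma pathUtil_b (hab : a ≠ b) (s : ℝ) : pathUtil a b s b = 2 * s / 3 := by
  simp [pathUtil, hab.symm]

lemma pathUtil_c (hac : a ≠ c) (hbc : b ≠ c) (s : ℝ) : pathUtil a b s c = -(s / 3) := by
  simp [pathUtil, hac.symm, hbc.symm]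

lemma ranks_pathUtil (hab : a ≠ b) (hac : a ≠ c) (hbc : b ≠ c)
    {s : ℝ} (hs : s ∈ Set.Ioo 0 1) : Ranks a b c (pathUtil a b s) := by
  rw [Ranks, pathUtil_a, pathUtil_b hab, pathUtil_c hac hbc]
  constructor <;> linarith [hs.1, hs.2]

lemma normalized_pathUtil (hab : a ≠ b) (hac : a ≠ c) (hbc : b ≠ c)
    (s : ℝ) : Normalized (pathUtil a b s) := by
  rw [Normalized, sum_eq_three hab hac hbc, pathUtil_a, pathUtil_b hab, pathUtil_c hac hbc]
  ring

lemma mu_pathUtil (hab : a ≠ b) (hac : a ≠ c) (hbc : b ≠ c)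
    (s : ℝ) : mu (pathUtil a b s) a b c = s := by
  rw [mu, pathUtil_a, pathUtil_b hab, pathUtil_c hac hbc]
  field_simp
  ring

lemma continuous_pathUtil : Continuous (pathUtil a b) := by
  refine continuous_pi fun x => ?_
  unfold pathUtil
  split_ifs <;> fun_prop

noncomputable def score (a b c : Fin 3) (v π : Fin 3 → ℝ) : ℝ := π a + mu v a b c * π b

lemma EU_eq_score {v π : Fin 3 → ℝ} (hv : Ranks a b c v) (hπ : ∑ x, π x = 1) :
    EU v π = v c + (v a - v c) * score a b c v π := by
  have hmu : mu v a b c * (v a - v c) = v b - v c :=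
    div_mul_cancel₀ _ (by linarith [hv.1, hv.2])
  rw [sum_eq_three hv.ne_ab hv.ne_ac hv.ne_bc] at hπ
  rw [EU, score, sum_eq_three hv.ne_ab hv.ne_ac hv.ne_bc]
  linear_combination (-(π b)) * hmu + v c * hπ

lemma EU_le_EU_iff {v π π' : Fin 3 → ℝ} (hv : Ranks a b c v) (hπ : ∑ x, π x = 1)
    (hπ' : ∑ x, π' x = 1) : EU v π' ≤ EU v π ↔ score a b c v π' ≤ score a b c v π := by
  rw [EU_eq_score hv hπ, EU_eq_score hv hπ', add_le_add_iff_left,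
    mul_le_mul_iff_of_pos_left (by linarith [hv.1, hv.2])]

lemma NoTiesProfile.update {P : Fin 3 → Fin 3 → ℝ} {m : Fin 3} {v : Fin 3 → ℝ}
    (hP : NoTiesProfile P) (hv : NoTies v) : NoTiesProfile (update P m v) := by
  intro n
  rcases eq_or_ne n m with rfl | h
  · simpa using hv
  · simpa [h] using hP n

section Rule

variable {φ : (Fin 3 → Fin 3 → ℝ) → Fin 3 → Fin 3 → ℝ} {p : Fin 3 → Fin 3 → ℝ} {m : Fin 3}
  {v : Fin 3 → ℝ}

lemma score_update_le (hB : BistochasticValued φ) (hSP : StrategyProof φ)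
    (hp : NoTiesProfile p) (hpm : Ranks a b c (p m)) (hv : NoTies v) :
    score a b c (p m) (φ (update p m v) m) ≤ score a b c (p m) (φ p m) :=
  (EU_le_EU_iff hpm ((hB p hp).2.1 m) ((hB (update p m v) (hp.update hv)).2.1 m)).1
    (hSP p m v hp hv)

lemma score_le_update (hB : BistochasticValued φ) (hSP : StrategyProof φ)
    (hp : NoTiesProfile p) (hv : Ranks a b c v) :
    score a b c v (φ p m) ≤ score a b c v (φ (update p m v) m) := by
  have h := score_update_le hB hSP (hp.update hv.noTies) (m := m) (by rwa [update_self]) (hp m)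
  rwa [update_self, update_idem, update_eq_self] at h

lemma mu_sub_mul_apply_b_sub_nonneg (hB : BistochasticValued φ) (hSP : StrategyProof φ)
    (hp : NoTiesProfile p) (hpm : Ranks a b c (p m)) (hv : Ranks a b c v) :
    0 ≤ (mu v a b c - mu (p m) a b c) * (φ (update p m v) m b - φ p m b) := by
  have h₁ := score_update_le hB hSP hp hpm hv.noTies
  have h₂ := score_le_update hB hSP hp hv (m := m)
  simp only [score] at h₁ h₂
  nlinarith

lemma eq_of_apply_b_eq (hB : BistochasticValued φ) (hSP : StrategyProof φ) (hNB : NonBossy φ)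
    (hp : NoTiesProfile p) (hpm : Ranks a b c (p m)) (hv : Ranks a b c v)
    (hb : φ (update p m v) m b = φ p m b) : φ (update p m v) = φ p := by
  have h₁ := score_update_le hB hSP hp hpm hv.noTies
  have h₂ := score_le_update hB hSP hp hv (m := m)
  have hrow := (hB p hp).2.1 m
  have hrow' := (hB (update p m v) (hp.update hv.noTies)).2.1 m
  simp only [score] at h₁ h₂
  rw [sum_eq_three hv.ne_ab hv.ne_ac hv.ne_bc] at hrow hrow'
  rw [hb] at h₁ h₂
  have ha : φ (update p m v) m a = φ p m a := by linarith
  have hrow_eq : φ (update p m v) m = φ p m :=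
    funext (forall_three hv.ne_ab hv.ne_ac hv.ne_bc ha hb (by linarith))
  exact (hNB p m v hp hv.noTies hrow_eq.symm).symm

lemma pos_of_apply_b_lt (hB : BistochasticValued φ) (hSP : StrategyProof φ)
    (hp : NoTiesProfile p) (hpm : Ranks a b c (p m)) (hv : Ranks a b c v)
    (hb : φ p m b < φ (update p m v) m b) : 0 < φ p m a ∧ 0 < φ p m c := by
  have h₁ := score_update_le hB hSP hp hpm hv.noTies
  have h₂ := score_le_update hB hSP hp hv (m := m)
  have hrow := (hB p hp).2.1 m
  have hrow' := (hB (update p m v) (hp.update hv.noTies)).2.1 m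
  have ha' := (hB (update p m v) (hp.update hv.noTies)).1 m a
  have hc' := (hB (update p m v) (hp.update hv.noTies)).1 m c
  obtain ⟨hμ₀, -⟩ := hpm.mu_mem
  obtain ⟨-, hμ₁⟩ := hv.mu_mem
  simp only [score] at h₁ h₂
  rw [sum_eq_three hv.ne_ab hv.ne_ac hv.ne_bc] at hrow hrow'
  constructor
  · nlinarith [mul_pos hμ₀ (sub_pos.2 hb)]
  · nlinarith [mul_pos (sub_pos.2 hμ₁) (sub_pos.2 hb)]

end Rule

section Path

variable {φ : (Fin 3 → Fin 3 → ℝ) → Fin 3 → Fin 3 → ℝ} {Q : Fin 3 → Fin 3 → ℝ} {m : Fin 3}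

lemma ranks_update_pathUtil (hab : a ≠ b) (hac : a ≠ c) (hbc : b ≠ c) {s : ℝ}
    (hs : s ∈ Set.Ioo 0 1) : Ranks a b c (update Q m (pathUtil a b s) m) := by
  rw [update_self]; exact ranks_pathUtil hab hac hbc hs

lemma mu_update_pathUtil (hab : a ≠ b) (hac : a ≠ c) (hbc : b ≠ c) (s : ℝ) :
    mu (update Q m (pathUtil a b s) m) a b c = s := by
  rw [update_self, mu_pathUtil hab hac hbc]

lemma NoTiesProfile.update_pathUtil (hQ : NoTiesProfile Q) (hab : a ≠ b) (hac : a ≠ c)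
    (hbc : b ≠ c) {s : ℝ} (hs : s ∈ Set.Ioo 0 1) :
    NoTiesProfile (Function.update Q m (pathUtil a b s)) :=
  hQ.update (ranks_pathUtil hab hac hbc hs).noTies

lemma path_monotoneOn (hab : a ≠ b) (hac : a ≠ c) (hbc : b ≠ c) (hB : BistochasticValued φ)
    (hSP : StrategyProof φ) (hQ : NoTiesProfile Q) :
    MonotoneOn (fun s => φ (update Q m (pathUtil a b s)) m b) (Set.Ioo 0 1) := by
  intro s hs t ht hst
  rcases hst.eq_or_lt with rfl | hlt
  · rfl
  have h := mu_sub_mul_apply_b_sub_nonneg hB hSP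
    (hQ.update_pathUtil hab hac hbc hs) (ranks_update_pathUtil (m := m) hab hac hbc hs)
    (ranks_pathUtil hab hac hbc ht)
  rw [update_idem, mu_update_pathUtil hab hac hbc, mu_pathUtil hab hac hbc] at h
  exact sub_nonneg.1 ((mul_nonneg_iff_of_pos_left (sub_pos.2 hlt)).1 h)

lemma path_eq_of_b_eq (hab : a ≠ b) (hac : a ≠ c) (hbc : b ≠ c) (hB : BistochasticValued φ)
    (hSP : StrategyProof φ) (hNB : NonBossy φ) (hQ : NoTiesProfile Q) {s t : ℝ}
    (hs : s ∈ Set.Ioo 0 1) (ht : t ∈ Set.Ioo 0 1)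
    (hb : φ (update Q m (pathUtil a b t)) m b = φ (update Q m (pathUtil a b s)) m b) :
    φ (update Q m (pathUtil a b t)) = φ (update Q m (pathUtil a b s)) := by
  have h := eq_of_apply_b_eq hB hSP hNB (hQ.update_pathUtil hab hac hbc hs)
    (ranks_update_pathUtil (m := m) hab hac hbc hs) (ranks_pathUtil hab hac hbc ht)
  rw [update_idem] at h
  exact h hb

lemma path_pos_of_b_lt (hab : a ≠ b) (hac : a ≠ c) (hbc : b ≠ c) (hB : BistochasticValued φ)
    (hSP : StrategyProof φ) (hQ : NoTiesProfile Q) {s t : ℝ}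
    (hs : s ∈ Set.Ioo 0 1) (ht : t ∈ Set.Ioo 0 1)
    (hb : φ (update Q m (pathUtil a b s)) m b < φ (update Q m (pathUtil a b t)) m b) :
    0 < φ (update Q m (pathUtil a b s)) m a ∧ 0 < φ (update Q m (pathUtil a b s)) m c := by
  have h := pos_of_apply_b_lt hB hSP (hQ.update_pathUtil hab hac hbc hs)
    (ranks_update_pathUtil (m := m) hab hac hbc hs) (ranks_pathUtil hab hac hbc ht)
  rw [update_idem] at h
  exact h hb

lemma continuousOn_path (hab : a ≠ b) (hac : a ≠ c) (hbc : b ≠ c) (hC : NCContinuous φ)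
    (hQ : NoTiesProfile Q) :
    ContinuousOn (fun s => φ (update Q m (pathUtil a b s))) (Set.Ioo 0 1) := by
  intro s hs
  refine ContinuousAt.continuousWithinAt ?_
  rw [ContinuousAt, tendsto_nhds_iff_seq_tendsto]
  intro x hx
  -- `hC` only accepts sequences of admissible utilities, so move the finitely many
  -- terms outside `(0, 1)` to `s`.
  set y : ℕ → ℝ := fun n => if x n ∈ Set.Ioo 0 1 then x n else s
  have hy : ∀ n, y n ∈ Set.Ioo 0 1 := fun n => by
    dsimp only [y]; split_ifs with h
    exacts [h, hs]
  have hxy : x =ᶠ[Filter.atTop] y :=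
    (hx.eventually (isOpen_Ioo.mem_nhds hs)).mono fun n hn => (if_pos hn).symm
  have h := hC (update Q m (pathUtil a b s)) m (fun n => pathUtil a b (y n))
    (hQ.update_pathUtil hab hac hbc hs)
    (by rw [update_self]; exact normalized_pathUtil hab hac hbc s)
    (fun n => ⟨(ranks_pathUtil hab hac hbc (hy n)).noTies, normalized_pathUtil hab hac hbc _⟩)
    (by rw [update_self]; exact (continuous_pathUtil.tendsto s).comp (hx.congr' hxy))
  simp only [update_idem] at h
  exact h.congr' (hxy.mono fun n hn => by simp [hn])

lemma continuousOn_path_apply (hab : a ≠ b) (hac : a ≠ c) (hbc : b ≠ c) (hC : NCContinuous φ)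
    (hQ : NoTiesProfile Q) (n x : Fin 3) :
    ContinuousOn (fun s => φ (update Q m (pathUtil a b s)) n x) (Set.Ioo 0 1) :=
  (continuous_apply x).comp_continuousOn
    ((continuous_apply n).comp_continuousOn (continuousOn_path hab hac hbc hC hQ))

lemma apply_update_pathUtil_mu (hB : BistochasticValued φ) (hSP : StrategyProof φ)
    (hNB : NonBossy φ) (hC : NCContinuous φ) (hQ : NoTiesProfile Q)
    (hQm : Ranks a b c (Q m)) :
    φ (update Q m (pathUtil a b (mu (Q m) a b c))) = φ Q := by
  obtain ⟨hab, hac, hbc⟩ := hQm.distinct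
  set τ := mu (Q m) a b c
  have hτ : τ ∈ Set.Ioo 0 1 := hQm.mu_mem
  set g := fun t => φ (update Q m (pathUtil a b t)) m b
  have hg : ContinuousAt g τ :=
    (continuousOn_path_apply hab hac hbc hC hQ m b).continuousAt (isOpen_Ioo.mem_nhds hτ)
  have hsign : ∀ t ∈ Set.Ioo 0 1, 0 ≤ (t - τ) * (g t - φ Q m b) := fun t ht => by
    simpa only [mu_pathUtil hab hac hbc] using
      mu_sub_mul_apply_b_sub_nonneg hB hSP hQ hQm (ranks_pathUtil hab hac hbc ht)
  have hge : φ Q m b ≤ g τ := by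
    refine ge_of_tendsto (hg.tendsto.mono_left (nhdsWithin_le_nhds (s := Set.Ioi τ))) ?_
    filter_upwards [Ioo_mem_nhdsGT hτ.2] with t ht
    exact sub_nonneg.1 ((mul_nonneg_iff_of_pos_left (sub_pos.2 ht.1)).1
      (hsign t ⟨hτ.1.trans ht.1, ht.2⟩))
  have hle : g τ ≤ φ Q m b := by
    refine le_of_tendsto (hg.tendsto.mono_left (nhdsWithin_le_nhds (s := Set.Iio τ))) ?_
    filter_upwards [Ioo_mem_nhdsLT hτ.1] with t ht
    exact sub_nonpos.1 (nonpos_of_mul_nonneg_right (hsign t ⟨ht.1, ht.2.trans hτ.2⟩)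
      (sub_neg.2 ht.2))
  exact eq_of_apply_b_eq hB hSP hNB hQ hQm (ranks_pathUtil hab hac hbc hτ) (le_antisymm hle hge)

end Path

lemma Bistochastic.pos_of_apply_eq_zero {M : Fin 3 → Fin 3 → ℝ} (hM : Bistochastic M)
    (hab : a ≠ b) (hac : a ≠ c) (hbc : b ≠ c) {i j : Fin 3} (hij : i ≠ j)
    (ha : 0 < M i a) (hc : 0 < M i c) (hb : M j b = 0) : 0 < M j a ∧ 0 < M j c := by
  have hcol : ∀ x, M i x + M j x ≤ 1 := fun x => hM.2.2 x ▸
    Finset.add_le_sum (fun n _ => hM.1 n x) (Finset.mem_univ i) (Finset.mem_univ j) hij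
  have hrow := hM.2.1 j
  rw [sum_eq_three hab hac hbc, hb] at hrow
  constructor <;> linarith [hcol a, hcol c]

noncomputable def tradeDir (a b c : Fin 3) (x : ℝ) : Fin 3 → ℝ :=
  Pi.single a x + Pi.single c (1 - x) - Pi.single b 1

lemma EU_tradeDir (v : Fin 3 → ℝ) (x : ℝ) :
    EU v (tradeDir a b c x) = x * v a + (1 - x) * v c - v b := by
  change dotProduct v (Pi.single a x + Pi.single c (1 - x) - Pi.single b 1) = _
  rw [dotProduct_sub, dotProduct_add, dotProduct_single, dotProduct_single, dotProduct_single]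
  ring

lemma EU_add_smul (v π d : Fin 3 → ℝ) (r : ℝ) : EU v (π + r • d) = EU v π + r * EU v d := by
  change dotProduct v (π + r • d) = dotProduct v π + r * dotProduct v d
  rw [dotProduct_add, dotProduct_smul, smul_eq_mul]

lemma Bistochastic.add_trade {M : Fin 3 → Fin 3 → ℝ} (hM : Bistochastic M) (hab : a ≠ b)
    (hac : a ≠ c) (hbc : b ≠ c) {l h : Fin 3} (hlh : l ≠ h) {x ε : ℝ} (hx0 : 0 ≤ x)
    (hx1 : x ≤ 1) (hε : 0 ≤ ε) (hεl : ε ≤ M l b) (hεa : ε ≤ M h a) (hεc : ε ≤ M h c) :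
    Bistochastic fun n =>
      M n + (Pi.single l ε - Pi.single h ε : Fin 3 → ℝ) n • tradeDir a b c x := by
  obtain ⟨k, hkl, hkh⟩ := exists_ne_ne l h
  refine ⟨fun n y => ?_, fun n => ?_, fun y => ?_⟩
  · have h0 := hM.1 n y
    simp only [Pi.add_apply, Pi.smul_apply, smul_eq_mul, tradeDir]
    rcases eq_or_eq_or_eq hlh hkl.symm hkh.symm n with rfl | rfl | rfl <;>
    rcases eq_or_eq_or_eq hab hac hbc y with rfl | rfl | rfl <;>
    simp [hlh, hlh.symm, hkl, hkh, hab, hac, hbc, hab.symm, hac.symm, hbc.symm] <;> nlinarith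
  · simp [Finset.sum_add_distrib, ← Finset.mul_sum, hM.2.1 n, tradeDir, Finset.sum_sub_distrib]
  · simp [Finset.sum_add_distrib, ← Finset.sum_mul, hM.2.2 y, Finset.sum_sub_distrib]

/-- The Pareto improvement: `l` gives `ε` of `b` to `h` for `ε x` of `a` and `ε (1 - x)` of `c`,
with `x` strictly between their rates. -/
lemma Efficient.false_of_trade {φ : (Fin 3 → Fin 3 → ℝ) → Fin 3 → Fin 3 → ℝ}
    {P : Fin 3 → Fin 3 → ℝ} (hB : BistochasticValued φ) (hE : Efficient φ) (hP : NoTiesProfile P)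
    {l h : Fin 3} (hlh : l ≠ h) (hl : Ranks a b c (P l))
    (hh : Ranks a b c (P h)) (hμ : mu (P l) a b c < mu (P h) a b c)
    (hlb : 0 < φ P l b) (hha : 0 < φ P h a) (hhc : 0 < φ P h c) : False := by
  obtain ⟨hab, hac, hbc⟩ := hl.distinct
  obtain ⟨x, hxl, hxh⟩ := exists_between hμ
  obtain ⟨ε, hε, hεl, hεa, hεc⟩ : ∃ ε > 0, ε ≤ φ P l b ∧ ε ≤ φ P h a ∧ ε ≤ φ P h c :=
    ⟨min (φ P l b) (min (φ P h a) (φ P h c)), lt_min hlb (lt_min hha hhc), min_le_left _ _,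
      (min_le_right _ _).trans (min_le_left _ _), (min_le_right _ _).trans (min_le_right _ _)⟩
  have hl_gain : 0 < EU (P l) (tradeDir a b c x) := by
    have := hl.mu_lt_iff.1 hxl
    rw [EU_tradeDir]; linarith
  have hh_gain : EU (P h) (tradeDir a b c x) < 0 := by
    have := hh.lt_mu_iff.1 hxh
    rw [EU_tradeDir]; linarith
  refine hE P hP ⟨_, Bistochastic.add_trade (hB P hP) hab hac hbc hlh (hl.mu_mem.1.trans hxl).le
    (hxh.trans hh.mu_mem.2).le hε.le hεl hεa hεc, fun n => ?_, l, ?_⟩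
  · rw [ge_iff_le, EU_add_smul, le_add_iff_nonneg_right]
    obtain ⟨k, hkl, hkh⟩ := exists_ne_ne l h
    rcases eq_or_eq_or_eq hlh hkl.symm hkh.symm n with rfl | rfl | rfl
    · simpa [hlh] using (mul_pos hε hl_gain).le
    · simpa [hlh.symm] using (mul_pos hε (neg_pos.2 hh_gain)).le
    · simp [hkl, hkh]
  · rw [gt_iff_lt, EU_add_smul, lt_add_iff_pos_right]
    simpa [hlh] using mul_pos hε hl_gain

lemma Efficient.false_of_mixed {φ : (Fin 3 → Fin 3 → ℝ) → Fin 3 → Fin 3 → ℝ}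
    {P : Fin 3 → Fin 3 → ℝ} (hB : BistochasticValued φ) (hE : Efficient φ)
    (hP : NoTiesProfile P) {i o : Fin 3} (hio : i ≠ o) (hi : Ranks a b c (P i))
    (ho : Ranks a b c (P o)) (hne : mu (P i) a b c ≠ mu (P o) a b c)
    (hmi : ∀ x, 0 < φ P i x) (hmo : ∀ x, 0 < φ P o x) : False := by
  rcases hne.lt_or_gt with h | h
  · exact hE.false_of_trade hB hP hio hi ho h (hmi b) (hmo a) (hmo c)
  · exact hE.false_of_trade hB hP hio.symm ho hi h (hmo b) (hmi a) (hmi c)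

lemma exists_mem_Ioo_ne_of_lt {f : ℝ → ℝ} {s t : ℝ} (hst : s ≤ t)
    (hf : ContinuousOn f (Set.Icc s t)) (h : f s < f t) (τ : ℝ) :
    ∃ σ ∈ Set.Ioo s t, σ ≠ τ ∧ f s < f σ ∧ f σ < f t := by
  have hval : ∀ y ∈ Set.Ioo (f s) (f t), ∃ z ∈ Set.Ioo s t, f z = y :=
    fun y hy => intermediate_value_Ioo hst hf hy
  obtain ⟨z₁, hz₁, h₁⟩ := hval ((2 * f s + f t) / 3) ⟨by linarith, by linarith⟩
  obtain ⟨z₂, hz₂, h₂⟩ := hval ((f s + 2 * f t) / 3) ⟨by linarith, by linarith⟩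
  by_cases hτ : z₁ = τ
  · refine ⟨z₂, hz₂, ?_, by linarith, by linarith⟩
    rintro rfl
    rw [hτ] at h₁
    linarith
  · exact ⟨z₁, hz₁, hτ, by linarith, by linarith⟩

lemma eventually_pos_apply {α : Type*} {l : Filter α} {f : α → Fin 3 → Fin 3 → ℝ}
    {M : Fin 3 → Fin 3 → ℝ} (h : Tendsto f l (𝓝 M)) {m x : Fin 3} (hM : 0 < M m x) :
    ∀ᶠ t in l, 0 < f t m x :=
  (tendsto_pi_nhds.1 (tendsto_pi_nhds.1 h m) x).eventually (lt_mem_nhds hM)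

lemma isCompact_Icc_inter_preimage {g : ℝ → ℝ} {p q : ℝ} (hg : ContinuousOn g (Set.Icc p q))
    (y : ℝ) : IsCompact (Set.Icc p q ∩ g ⁻¹' {y}) :=
  isCompact_Icc.of_isClosed_subset
    (hg.preimage_isClosed_of_isClosed isClosed_Icc isClosed_singleton) Set.inter_subset_left

section Constancy

variable {φ : (Fin 3 → Fin 3 → ℝ) → Fin 3 → Fin 3 → ℝ} {R : Fin 3 → Fin 3 → ℝ} {i o : Fin 3}

lemma exists_last_zero_of_mu_lt (hB : BistochasticValued φ) (hE : Efficient φ)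
    (hSP : StrategyProof φ) (hNB : NonBossy φ) (hC : NCContinuous φ) (hR : NoTiesProfile R)
    (hio : i ≠ o) (hi : Ranks a b c (R i)) (ho : Ranks a b c (R o))
    (hlt : mu (R o) a b c < mu (R i) a b c) (hib : 0 < φ R i b) (hoa : 0 < φ R o a)
    (hob : φ R o b = 0) (hoc : 0 < φ R o c) :
    ∃ T ∈ Set.Ioo 0 1, φ (update R o (pathUtil a b T)) = φ R ∧
      ∀ t ∈ Set.Ioo T 1, 0 < φ (update R o (pathUtil a b t)) o b := by
  obtain ⟨hab, hac, hbc⟩ := hi.distinct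
  set P : ℝ → Fin 3 → Fin 3 → ℝ := fun t => update R o (pathUtil a b t)
  have heq : ∀ t ∈ Set.Ioo 0 1, φ (P t) o b = 0 → φ (P t) = φ R := fun t ht h =>
    eq_of_apply_b_eq hB hSP hNB hR ho (ranks_pathUtil hab hac hbc ht) (h.trans hob.symm)
  have hle : ∀ t ∈ Set.Ioo 0 1, φ (P t) o b = 0 → t ≤ mu (R i) a b c := by
    intro t ht h
    by_contra! hσt
    have hPt := heq t ht h
    refine hE.false_of_trade hB (hR.update_pathUtil hab hac hbc ht) hio
      (by rwa [update_of_ne hio]) (ranks_update_pathUtil hab hac hbc ht)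
      (by rwa [update_of_ne hio, mu_update_pathUtil hab hac hbc]) ?_ ?_ ?_
    all_goals rw [hPt]
    exacts [hib, hoa, hoc]
  have hsub : Set.Icc (mu (R o) a b c) (mu (R i) a b c) ⊆ Set.Ioo 0 1 :=
    Set.Icc_subset_Ioo ho.mu_mem.1 hi.mu_mem.2
  set Z := Set.Icc (mu (R o) a b c) (mu (R i) a b c) ∩ (fun t => φ (P t) o b) ⁻¹' {0}
  have hτZ : mu (R o) a b c ∈ Z := ⟨⟨le_rfl, hlt.le⟩, by
    simp [P, apply_update_pathUtil_mu hB hSP hNB hC hR ho, hob]⟩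
  obtain ⟨T, hTZ, hTmax⟩ := (isCompact_Icc_inter_preimage
    ((continuousOn_path_apply hab hac hbc hC hR o b).mono hsub) 0).exists_isGreatest ⟨_, hτZ⟩
  have hT : T ∈ Set.Ioo 0 1 := hsub hTZ.1
  refine ⟨T, hT, heq T hT hTZ.2, fun t ht => ?_⟩
  have ht' : t ∈ Set.Ioo 0 1 := ⟨hT.1.trans ht.1, ht.2⟩
  refine ((hB _ (hR.update_pathUtil hab hac hbc ht')).1 o b).lt_of_ne fun h => ?_
  exact (hTmax ⟨⟨hTZ.1.1.trans ht.1.le, hle t ht' h.symm⟩, h.symm⟩).not_gt ht.1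

lemma false_of_mu_lt_of_mixed (hB : BistochasticValued φ) (hE : Efficient φ)
    (hSP : StrategyProof φ) (hNB : NonBossy φ) (hC : NCContinuous φ) (hR : NoTiesProfile R)
    (hio : i ≠ o) (hi : Ranks a b c (R i)) (ho : Ranks a b c (R o))
    (hlt : mu (R o) a b c < mu (R i) a b c) (hmix : ∀ x, 0 < φ R i x) : False := by
  obtain ⟨hab, hac, hbc⟩ := hi.distinct
  have hob : φ R o b = 0 := le_antisymm (not_lt.1 fun hpos =>
    hE.false_of_trade hB hR hio.symm ho hi hlt hpos (hmix a) (hmix c)) ((hB R hR).1 o b)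
  obtain ⟨hoa, hoc⟩ := (hB R hR).pos_of_apply_eq_zero hab hac hbc hio (hmix a) (hmix c) hob
  obtain ⟨T, hT, hPT, hbeyond⟩ :=
    exists_last_zero_of_mu_lt hB hE hSP hNB hC hR hio hi ho hlt (hmix b) hoa hob hoc
  have hlim : Tendsto (fun t => φ (update R o (pathUtil a b t))) (𝓝[>] T) (𝓝 (φ R)) :=
    hPT ▸ (((continuousOn_path hab hac hbc hC hR).continuousAt
      (isOpen_Ioo.mem_nhds hT)).tendsto.mono_left nhdsWithin_le_nhds)
  have hev : ∀ᶠ t in 𝓝[>] T, t ∈ Set.Ioo T 1 ∧ t ≠ mu (R i) a b c ∧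
      (∀ x, 0 < φ (update R o (pathUtil a b t)) i x) ∧
      0 < φ (update R o (pathUtil a b t)) o a ∧ 0 < φ (update R o (pathUtil a b t)) o c := by
    filter_upwards [Ioo_mem_nhdsGT hT.2, (eventually_cofinite_ne _).filter_mono
      ((nhdsGT_le_nhdsNE T).trans (nhdsNE_le_cofinite T)),
      eventually_all.2 fun x => eventually_pos_apply hlim (hmix x),
      eventually_pos_apply hlim hoa, eventually_pos_apply hlim hoc] with t h₁ h₂ h₃ h₄ h₅
    exact ⟨h₁, h₂, h₃, h₄, h₅⟩
  obtain ⟨t, ht, htσ, hmix', hoa', hoc'⟩ := hev.exists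
  have ht' : t ∈ Set.Ioo 0 1 := ⟨hT.1.trans ht.1, ht.2⟩
  exact hE.false_of_mixed hB (hR.update_pathUtil hab hac hbc ht') hio
    (by rwa [update_of_ne hio]) (ranks_update_pathUtil hab hac hbc ht')
    (by rw [update_of_ne hio, mu_update_pathUtil hab hac hbc]; exact htσ.symm)
    hmix' (forall_three hab hac hbc hoa' (hbeyond t ht) hoc')

lemma exists_first_eq_of_lt_mu (hB : BistochasticValued φ) (hE : Efficient φ)
    (hSP : StrategyProof φ) (hNB : NonBossy φ) (hC : NCContinuous φ) (hR : NoTiesProfile R)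
    (hio : i ≠ o) (hi : Ranks a b c (R i)) (ho : Ranks a b c (R o))
    (hlt : mu (R i) a b c < mu (R o) a b c) (hia : 0 < φ R i a) (hob : 0 < φ R o b)
    (hic : 0 < φ R i c) :
    ∃ T ∈ Set.Ioo 0 1, φ (update R o (pathUtil a b T)) = φ R ∧ ∀ t ∈ Set.Ioo 0 T,
      φ (update R o (pathUtil a b t)) o b < φ (update R o (pathUtil a b T)) o b := by
  obtain ⟨hab, hac, hbc⟩ := hi.distinct
  set P : ℝ → Fin 3 → Fin 3 → ℝ := fun t => update R o (pathUtil a b t)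
  have heq : ∀ t ∈ Set.Ioo 0 1, φ (P t) o b = φ R o b → φ (P t) = φ R := fun t ht h =>
    eq_of_apply_b_eq hB hSP hNB hR ho (ranks_pathUtil hab hac hbc ht) h
  have hge : ∀ t ∈ Set.Ioo 0 1, φ (P t) o b = φ R o b → mu (R i) a b c ≤ t := by
    intro t ht h
    by_contra! htσ
    have hPt := heq t ht h
    refine hE.false_of_trade hB (hR.update_pathUtil hab hac hbc ht) hio.symm
      (ranks_update_pathUtil hab hac hbc ht) (by rwa [update_of_ne hio])
      (by rwa [update_of_ne hio, mu_update_pathUtil hab hac hbc]) ?_ ?_ ?_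
    all_goals rw [hPt]
    exacts [hob, hia, hic]
  have hsub : Set.Icc (mu (R i) a b c) (mu (R o) a b c) ⊆ Set.Ioo 0 1 :=
    Set.Icc_subset_Ioo hi.mu_mem.1 ho.mu_mem.2
  set Z := Set.Icc (mu (R i) a b c) (mu (R o) a b c) ∩ (fun t => φ (P t) o b) ⁻¹' {φ R o b}
  have hτZ : mu (R o) a b c ∈ Z := ⟨⟨hlt.le, le_rfl⟩, by
    simp [P, apply_update_pathUtil_mu hB hSP hNB hC hR ho]⟩
  obtain ⟨T, hTZ, hTmin⟩ := (isCompact_Icc_inter_preimage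
    ((continuousOn_path_apply hab hac hbc hC hR o b).mono hsub) _).exists_isLeast ⟨_, hτZ⟩
  have hT : T ∈ Set.Ioo 0 1 := hsub hTZ.1
  have hPT := heq T hT hTZ.2
  refine ⟨T, hT, hPT, fun t ht => ?_⟩
  have ht' : t ∈ Set.Ioo 0 1 := ⟨ht.1, ht.2.trans hT.2⟩
  refine (path_monotoneOn hab hac hbc hB hSP hR ht' hT ht.2.le).lt_of_ne fun h => ?_
  replace h : φ (P t) o b = φ R o b := hPT ▸ h
  exact (hTmin ⟨⟨hge t ht' h, ht.2.le.trans hTZ.1.2⟩, h⟩).not_gt ht.2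

lemma false_of_lt_mu_of_mixed (hB : BistochasticValued φ) (hE : Efficient φ)
    (hSP : StrategyProof φ) (hNB : NonBossy φ) (hC : NCContinuous φ) (hR : NoTiesProfile R)
    (hio : i ≠ o) (hi : Ranks a b c (R i)) (ho : Ranks a b c (R o))
    (hlt : mu (R i) a b c < mu (R o) a b c) (hmix : ∀ x, 0 < φ R i x) : False := by
  obtain ⟨hab, hac, hbc⟩ := hi.distinct
  have hob : 0 < φ R o b := by
    refine ((hB R hR).1 o b).lt_of_ne fun h => ?_
    obtain ⟨hoa, hoc⟩ := (hB R hR).pos_of_apply_eq_zero hab hac hbc hio (hmix a) (hmix c) h.symm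
    exact hE.false_of_trade hB hR hio hi ho hlt (hmix b) hoa hoc
  obtain ⟨T, hT, hPT, hbelow⟩ :=
    exists_first_eq_of_lt_mu hB hE hSP hNB hC hR hio hi ho hlt (hmix a) hob (hmix c)
  have hlim : Tendsto (fun t => φ (update R o (pathUtil a b t))) (𝓝[<] T) (𝓝 (φ R)) :=
    hPT ▸ (((continuousOn_path hab hac hbc hC hR).continuousAt
      (isOpen_Ioo.mem_nhds hT)).tendsto.mono_left nhdsWithin_le_nhds)
  have hev : ∀ᶠ t in 𝓝[<] T, t ∈ Set.Ioo 0 T ∧ t ≠ mu (R i) a b c ∧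
      (∀ x, 0 < φ (update R o (pathUtil a b t)) i x) ∧
      0 < φ (update R o (pathUtil a b t)) o b := by
    filter_upwards [Ioo_mem_nhdsLT hT.1, (eventually_cofinite_ne _).filter_mono
      ((nhdsLT_le_nhdsNE T).trans (nhdsNE_le_cofinite T)),
      eventually_all.2 fun x => eventually_pos_apply hlim (hmix x),
      eventually_pos_apply hlim hob] with t h₁ h₂ h₃ h₄
    exact ⟨h₁, h₂, h₃, h₄⟩
  obtain ⟨t, ht, htσ, hmix', hob'⟩ := hev.exists
  have ht' : t ∈ Set.Ioo 0 1 := ⟨ht.1, ht.2.trans hT.2⟩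
  obtain ⟨hoa', hoc'⟩ := path_pos_of_b_lt hab hac hbc hB hSP hR ht' hT (hbelow t ht)
  exact hE.false_of_mixed hB (hR.update_pathUtil hab hac hbc ht') hio
    (by rwa [update_of_ne hio]) (ranks_update_pathUtil hab hac hbc ht')
    (by rw [update_of_ne hio, mu_update_pathUtil hab hac hbc]; exact htσ.symm)
    hmix' (forall_three hab hac hbc hoa' hob' hoc')

end Constancy

section Invariance

variable {φ : (Fin 3 → Fin 3 → ℝ) → Fin 3 → Fin 3 → ℝ} {Q : Fin 3 → Fin 3 → ℝ} {i o : Fin 3}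

lemma path_apply_b_eq (hB : BistochasticValued φ) (hE : Efficient φ) (hSP : StrategyProof φ)
    (hNB : NonBossy φ) (hC : NCContinuous φ) (hQ : NoTiesProfile Q) (hio : i ≠ o)
    (ho : Ranks a b c (Q o)) {s t : ℝ} (hs : s ∈ Set.Ioo 0 1) (ht : t ∈ Set.Ioo 0 1) :
    φ (update Q i (pathUtil a b s)) i b = φ (update Q i (pathUtil a b t)) i b := by
  obtain ⟨hab, hac, hbc⟩ := ho.distinct
  have hmono := path_monotoneOn (m := i) hab hac hbc hB hSP hQ
  suffices hrise : ∀ s ∈ Set.Ioo 0 1, ∀ t ∈ Set.Ioo 0 1, s ≤ t →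
      ¬ φ (update Q i (pathUtil a b s)) i b < φ (update Q i (pathUtil a b t)) i b by
    rcases le_total s t with hst | hts
    · exact le_antisymm (hmono hs ht hst) (not_lt.1 (hrise s hs t ht hst))
    · exact le_antisymm (not_lt.1 (hrise t ht s hs hts)) (hmono ht hs hts)
  intro s hs t ht hst hlt
  obtain ⟨σ, hσst, hστ, hsσ, hσt⟩ := exists_mem_Ioo_ne_of_lt hst
    ((continuousOn_path_apply hab hac hbc hC hQ i b).mono (Set.Icc_subset_Ioo hs.1 ht.2)) hlt
    (mu (Q o) a b c)
  have hσ : σ ∈ Set.Ioo 0 1 := ⟨hs.1.trans hσst.1, hσst.2.trans ht.2⟩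
  have hR := hQ.update_pathUtil (m := i) hab hac hbc hσ
  obtain ⟨ha, hc⟩ := path_pos_of_b_lt hab hac hbc hB hSP hQ hσ ht hσt
  have hb := ((hB _ (hQ.update_pathUtil hab hac hbc hs)).1 i b).trans_lt hsσ
  have hmix : ∀ x, 0 < φ (update Q i (pathUtil a b σ)) i x := forall_three hab hac hbc ha hb hc
  have hRo : update Q i (pathUtil a b σ) o = Q o := update_of_ne hio.symm _ _
  have hRi := ranks_update_pathUtil (Q := Q) (m := i) hab hac hbc hσ
  rcases hστ.lt_or_gt with h | h
  · refine false_of_lt_mu_of_mixed hB hE hSP hNB hC hR hio hRi (hRo ▸ ho) ?_ hmix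
    rwa [mu_update_pathUtil hab hac hbc, hRo]
  · refine false_of_mu_lt_of_mixed hB hE hSP hNB hC hR hio hRi (hRo ▸ ho) ?_ hmix
    rwa [mu_update_pathUtil hab hac hbc, hRo]

lemma apply_update_eq_of_ranks (hB : BistochasticValued φ) (hE : Efficient φ)
    (hSP : StrategyProof φ) (hNB : NonBossy φ) (hC : NCContinuous φ) (hQ : NoTiesProfile Q)
    (hio : i ≠ o) (hi : Ranks a b c (Q i)) (ho : Ranks a b c (Q o)) {v : Fin 3 → ℝ}
    (hv : Ranks a b c v) : φ (update Q i v) = φ Q := by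
  obtain ⟨hab, hac, hbc⟩ := hi.distinct
  have hv_path := apply_update_pathUtil_mu hB hSP hNB hC (hQ.update hv.noTies) (m := i)
    (by rwa [update_self])
  rw [update_idem, update_self] at hv_path
  rw [← hv_path, ← apply_update_pathUtil_mu hB hSP hNB hC hQ hi]
  exact path_eq_of_b_eq hab hac hbc hB hSP hNB hQ hi.mu_mem hv.mu_mem
    (path_apply_b_eq hB hE hSP hNB hC hQ hio ho hv.mu_mem hi.mu_mem)

end Invariance

theorem stmt9_general (φ : (Fin 3 → Fin 3 → ℝ) → Fin 3 → Fin 3 → ℝ)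
    (hB : BistochasticValued φ) (hE : Efficient φ) (hSP : StrategyProof φ)
    (hNB : NonBossy φ) (hC : NCContinuous φ)
    (u : Fin 3 → Fin 3 → ℝ) (hu : NoTiesProfile u)
    (i j : Fin 3) (hij : i ≠ j) (hord : SameOrder (u i) (u j))
    (a b c : Fin 3)
    (h1 : u i a > u i b) (h2 : u i b > u i c)
    (ui' uj' : Fin 3 → ℝ)
    (hsi : SameOrder ui' (u i)) (hsj : SameOrder uj' (u i)) :
    φ (Function.update (Function.update u i ui') j uj') = φ u := by
  have hi : Ranks a b c (u i) := ⟨h1, h2⟩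
  have hj : Ranks a b c (u j) := hi.of_sameOrder fun x y => (hord x y).symm
  have hi' : Ranks a b c ui' := hi.of_sameOrder hsi
  have hj' : Ranks a b c uj' := hi.of_sameOrder hsj
  have hu' : NoTiesProfile (update u i ui') := hu.update hi'.noTies
  rw [apply_update_eq_of_ranks hB hE hSP hNB hC hu' hij.symm
      (by rwa [update_of_ne hij.symm]) (by rwa [update_self]) hj',
    apply_update_eq_of_ranks hB hE hSP hNB hC hu hij hi hj hi']

theorem stmt9 (φ : (Fin 3 → Fin 3 → ℝ) → Fin 3 → Fin 3 → ℝ)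
    (hB : BistochasticValued φ) (hE : Efficient φ) (hSP : StrategyProof φ)
    (hNB : NonBossy φ) (hC : NCContinuous φ)
    (u : Fin 3 → Fin 3 → ℝ) (hu : NoTiesProfile u)
    (i j : Fin 3) (hij : i ≠ j) (hord : SameOrder (u i) (u j))
    (a b c : Fin 3) (hab : a ≠ b) (hac : a ≠ c) (hbc : b ≠ c)
    (h1 : u i a > u i b) (h2 : u i b > u i c)
    (hpos : φ u i b + φ u j b > 0)
    (ui' uj' : Fin 3 → ℝ) (hui' : NoTies ui') (huj' : NoTies uj')
    (hsi : SameOrder ui' (u i)) (hsj : SameOrder uj' (u i)) :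
    φ (Function.update (Function.update u i ui') j uj') = φ u :=
  stmt9_general φ hB hE hSP hNB hC u hu i j hij hord a b c h1 h2 ui' uj' hsi hsj
end
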